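/- arXiv:2602.18837 — 6 statements merged into one kernel-verified Lean document; each statement's English description precedes it below -/
import Mathlib

section
/- In the rank-one update setting with ρ ≠ 0, if μ ∈ ℝ is an eigenvalue of L̃ = L + ρ v vᵀ and μ ≠ λ_i for every i ∈ {1,…,n}, then μ satisfies the secular equation 1 + ρ Σ_{i=1}^n z_i² / (λ_i − μ) = 0. -/
open Matrix Finset

/-- Rank-one update setting: if `μ` is an eigenvalue of `L̃ = L + ρ v vᵀ` with `ρ ≠ 0`
and `μ ≠ λ_i` for all `i`, then `μ` satisfies the secular equation
`1 + ρ Σ_i z_i² / (λ_i - μ) = 0`, where `z = Uᵀ v`. -/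
theorem secular_equation_of_eigenvalue
    {n : ℕ} (L U : Matrix (Fin n) (Fin n) ℝ) (lam : Fin n → ℝ)
    (hU : Uᵀ * U = 1)
    (hLd : L = U * Matrix.diagonal lam * Uᵀ)
    (hmono : Monotone lam)
    (ρ : ℝ) (hρ : ρ ≠ 0) (v : Fin n → ℝ)
    (z : Fin n → ℝ) (hz : z = Uᵀ.mulVec v)
    (μ : ℝ) (hμ : ∀ i, μ ≠ lam i)
    (heig : ∃ x : Fin n → ℝ, x ≠ 0 ∧ (L + ρ • vecMulVec v v).mulVec x = μ • x) :
    1 + ρ * ∑ i, z i ^ 2 / (lam i - μ) = 0 := by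
  obtain ⟨x, hx0, hx⟩ := heig
  have hUU : U * Uᵀ = 1 := mul_eq_one_comm.mp hU
  set y : Fin n → ℝ := Uᵀ.mulVec x with hy
  set c : ℝ := v ⬝ᵥ x with hc
  have hvv : (vecMulVec v v).mulVec x = c • v := by
    funext i
    simp only [Matrix.mulVec, Matrix.vecMulVec_apply, dotProduct, Pi.smul_apply,
      smul_eq_mul, hc]
    rw [Finset.sum_mul]
    refine Finset.sum_congr rfl fun j _ => by ring
  have hxU : U.mulVec y = x := by
    rw [hy, Matrix.mulVec_mulVec, hUU, Matrix.one_mulVec]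
  -- apply Uᵀ to the eigen equation
  have h1 : Matrix.mulVec (Matrix.diagonal lam) y + ρ • (c • z) = μ • y := by
    have := congrArg (Uᵀ.mulVec ·) hx
    simp only [Matrix.add_mulVec, hLd, Matrix.smul_mulVec, hvv,
      Matrix.mulVec_add, Matrix.mulVec_smul] at this
    have hUL : Uᵀ * (U * Matrix.diagonal lam * Uᵀ) = Matrix.diagonal lam * Uᵀ := by
      rw [← mul_assoc, ← mul_assoc, hU, one_mul]
    rw [Matrix.mulVec_mulVec, hUL] at this
    rw [hy, hz, Matrix.mulVec_mulVec]
    exact this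
  have key : ∀ i, lam i * y i + ρ * (c * z i) = μ * y i := by
    intro i
    have := congrFun h1 i
    simpa [Matrix.mulVec_diagonal] using this
  have hyi : ∀ i, y i = ρ * c * z i / (μ - lam i) := by
    intro i
    have hne : μ - lam i ≠ 0 := sub_ne_zero.mpr (hμ i)
    have := key i
    field_simp
    nlinarith [key i]
  have hc0 : c ≠ 0 := by
    intro h
    apply hx0
    have hy0 : y = 0 := by
      funext i
      simp [hyi i, h]
    rw [← hxU, hy0, Matrix.mulVec_zero]
  have hzy : z ⬝ᵥ y = c := by
    rw [hz, Matrix.mulVec_transpose, ← Matrix.dotProduct_mulVec, hxU]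
  have hcc : c = ρ * c * ∑ i, z i ^ 2 / (μ - lam i) := by
    calc c = z ⬝ᵥ y := hzy.symm
    _ = ∑ i, z i * (ρ * c * z i / (μ - lam i)) := by
        simp only [dotProduct]
        exact Finset.sum_congr rfl fun i _ => by rw [hyi i]
    _ = ρ * c * ∑ i, z i ^ 2 / (μ - lam i) := by
        rw [Finset.mul_sum]
        exact Finset.sum_congr rfl fun i _ => by ring
  have hsum : ∑ i, z i ^ 2 / (μ - lam i) = -∑ i, z i ^ 2 / (lam i - μ) := by
    rw [← Finset.sum_neg_distrib]
    exact Finset.sum_congr rfl fun i _ => by rw [← neg_sub (lam i) μ, div_neg]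
  rw [hsum] at hcc
  have h2 : c * (1 + ρ * ∑ i, z i ^ 2 / (lam i - μ)) = 0 := by linear_combination hcc
  exact (mul_eq_zero.mp h2).resolve_left hc0
end

section
/- In the rank-one update setting with ρ ≠ 0, if μ ∈ ℝ satisfies μ ≠ λ_i for every i ∈ {1,…,n} and the secular equation 1 + ρ Σ_{i=1}^n z_i² / (λ_i − μ) = 0, then μ is an eigenvalue of L̃ = L + ρ v vᵀ, and the vector U w with w_i = z_i / (λ_i − μ) is nonzero and satisfies L̃ (U w) = μ (U w). -/
open Matrix Finset

/-- Rank-one update setting: if `μ ≠ λ_i` for all `i` and `μ` satisfies the secular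
equation `1 + ρ Σ_i z_i² / (λ_i - μ) = 0` (with `ρ ≠ 0`, `z = Uᵀ v`), then `μ` is an
eigenvalue of `L̃ = L + ρ v vᵀ`, with eigenvector `U w`, `w_i = z_i / (λ_i - μ)`. -/
theorem eigenvalue_of_secular_equation
    {n : ℕ} (L U : Matrix (Fin n) (Fin n) ℝ) (lam : Fin n → ℝ)
    (hU : Uᵀ * U = 1)
    (hLd : L = U * Matrix.diagonal lam * Uᵀ)
    (hmono : Monotone lam)
    (ρ : ℝ) (hρ : ρ ≠ 0) (v : Fin n → ℝ)
    (z : Fin n → ℝ) (hz : z = Uᵀ.mulVec v)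
    (μ : ℝ) (hμ : ∀ i, μ ≠ lam i)
    (hsec : 1 + ρ * ∑ i, z i ^ 2 / (lam i - μ) = 0) :
    U.mulVec (fun i => z i / (lam i - μ)) ≠ 0 ∧
    (L + ρ • vecMulVec v v).mulVec (U.mulVec (fun i => z i / (lam i - μ)))
      = μ • U.mulVec (fun i => z i / (lam i - μ)) := by
  have hUU : U * Uᵀ = 1 := mul_eq_one_comm.mp hU
  have hne : ∀ i, lam i - μ ≠ 0 := fun i => sub_ne_zero.mpr (fun h => hμ i h.symm)
  set w : Fin n → ℝ := fun i => z i / (lam i - μ) with hw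
  constructor
  · intro h0
    have hw0 : w = 0 := by
      have : Uᵀ.mulVec (U.mulVec w) = Uᵀ.mulVec 0 := by rw [h0]
      simpa [Matrix.mulVec_mulVec, hU] using this
    have hz0 : ∀ i, z i = 0 := by
      intro i
      have := congrFun hw0 i
      simpa [hw, div_eq_zero_iff, hne i] using this
    simp [hz0] at hsec
  · -- dot product z ⬝ w = -1/ρ in the sense ρ * (z ⬝ w) = -1
    have hdot : z ⬝ᵥ w = ∑ i, z i ^ 2 / (lam i - μ) := by
      simp [dotProduct, hw, sq, mul_div_assoc]
    have key : ρ * (z ⬝ᵥ w) = -1 := by rw [hdot]; linarith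
    have hvU : v ⬝ᵥ U.mulVec w = z ⬝ᵥ w := by
      rw [hz, Matrix.mulVec_transpose, Matrix.dotProduct_mulVec]
    have hvec : (vecMulVec v v).mulVec (U.mulVec w) = (v ⬝ᵥ U.mulVec w) • v := by
      ext i
      simp [vecMulVec, Matrix.mulVec, dotProduct, Finset.mul_sum, mul_comm, mul_assoc]
    have hLw : L.mulVec (U.mulVec w) = U.mulVec (fun i => lam i * w i) := by
      rw [hLd, Matrix.mulVec_mulVec, Matrix.mul_assoc, Matrix.mul_assoc,
        hU, Matrix.mul_one, ← Matrix.mulVec_mulVec]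
      have hd : Matrix.diagonal lam *ᵥ w = fun i => lam i * w i := by
        funext i; exact Matrix.mulVec_diagonal lam w i
      rw [hd]
    have hUz : U.mulVec z = v := by
      rw [hz, Matrix.mulVec_mulVec, hUU, Matrix.one_mulVec]
    have hlamw : (fun i => lam i * w i) = (fun i => μ * w i) + z := by
      funext i
      have : (lam i - μ) * w i = z i := by
        show (lam i - μ) * (z i / (lam i - μ)) = z i
        rw [mul_comm, div_mul_cancel₀ _ (hne i)]
      simp only [Pi.add_apply]
      nlinarith [this]
    rw [Matrix.add_mulVec, Matrix.smul_mulVec, hvec, hvU, hLw, hlamw,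
      Matrix.mulVec_add, hUz]
    rw [smul_smul, key]
    have : U.mulVec (fun i => μ * w i) = μ • U.mulVec w := by
      rw [← Matrix.mulVec_smul]
      congr 1
    rw [this]
    ext i
    simp
end

section
/- In the rank-one update setting, under the generic assumptions and with ρ > 0, the interleaving of eigenvalues is strict: λ_i < λ̃_i for every i ∈ {1,…,n} and λ̃_i < λ_{i+1} for every i ∈ {1,…,n−1}; in particular the eigenvalues λ̃_1 < … < λ̃_n of L̃ are pairwise distinct, no λ̃_j equals any λ_i, and λ̃_n ≤ λ_n + ρ ‖z‖₂². -/
/-!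
Conjugating by `U`, the characteristic polynomial of `L̃` is `det (diag (λ - t) + ρ z zᵀ)`, which by
the matrix determinant lemma equals `P t = ∏ (λ_i - t) + ρ ∑ z_i² ∏_{k ≠ i} (λ_k - t)`. Since
`P λ_i = ρ z_i² ∏_{k ≠ i} (λ_k - λ_i)` has sign `(-1)^i` and `(-1)^(n+1) P (λ_n + ρ ‖z‖²) ≥ 0`, the
intermediate value theorem gives zeros `λ_i < r_i < λ_{i+1}` and `λ_n < r_n ≤ λ_n + ρ ‖z‖²`.
These `n + 1` distinct zeros are eigenvalues of `L̃`, so the monotone enumeration `λ̃` of its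
spectrum must be `r`.
-/

open Matrix Finset

namespace Matrix

variable {ι : Type*} [Fintype ι]

theorem vecMulVec_mulVec_mulVec {R : Type*} [CommRing R] (U : Matrix ι ι R) (z : ι → R) :
    vecMulVec (U *ᵥ z) (U *ᵥ z) = U * vecMulVec z z * Uᵀ := by
  rw [Matrix.mul_assoc, vecMulVec_mul, mul_vecMulVec, vecMul_transpose]

variable [DecidableEq ι]

theorem det_diagonal_add_vecMulVec {K : Type*} [Field K] {d : ι → K} (hd : ∀ i, d i ≠ 0)
    (u w : ι → K) :
    det (diagonal d + vecMulVec u w) = (∏ i, d i) * (1 + ∑ i, u i * w i / d i) := by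
  have hfactor : diagonal d + vecMulVec u w =
      diagonal d * (1 + replicateCol Unit (fun i => u i / d i) * replicateRow Unit w) := by
    rw [← vecMulVec_eq, Matrix.mul_add, Matrix.mul_one, mul_vecMulVec]
    congr 2
    ext i
    rw [mulVec_diagonal, mul_div_cancel₀ _ (hd i)]
  rw [hfactor, det_mul, det_diagonal, det_one_add_replicateCol_mul_replicateRow]
  simp only [dotProduct, mul_comm (w _), div_mul_eq_mul_div]

theorem det_mul_mul_transpose {R : Type*} [CommRing R] {U : Matrix ι ι R} (hU : Uᵀ * U = 1)
    (A : Matrix ι ι R) : det (U * A * Uᵀ) = det A := by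
  have hdet : det U * det U = 1 := by simpa using congrArg det hU
  rw [det_mul, det_mul, det_transpose]
  linear_combination det A * hdet

theorem mul_diagonal_sub_mul_transpose {R : Type*} [CommRing R] {U : Matrix ι ι R}
    (hU : U * Uᵀ = 1) (d : ι → R) (t : R) :
    U * diagonal (fun i => d i - t) * Uᵀ = U * diagonal d * Uᵀ - t • 1 := by
  rw [← diagonal_sub d (fun _ => t), ← smul_one_eq_diagonal, Matrix.mul_sub, Matrix.sub_mul,
    Matrix.mul_smul, Matrix.smul_mul, Matrix.mul_one, hU]

end Matrix


theorem prod_sub_eq_det_diagonal_add_vecMulVec {ι : Type*} [Fintype ι] [DecidableEq ι]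
    {L U tU : Matrix ι ι ℝ} {lam tlam : ι → ℝ} (hU : Uᵀ * U = 1)
    (hLd : L = U * diagonal lam * Uᵀ) {ρ : ℝ} {v z : ι → ℝ} (hz : z = Uᵀ *ᵥ v)
    (htU : tUᵀ * tU = 1) (htLd : L + ρ • vecMulVec v v = tU * diagonal tlam * tUᵀ) (t : ℝ) :
    ∏ j, (tlam j - t) = det (diagonal (fun i => lam i - t) + vecMulVec (ρ • z) z) := by
  have hU' : U * Uᵀ = 1 := mul_eq_one_comm.mp hU
  have hv : v = U *ᵥ z := by rw [hz, mulVec_mulVec, hU', one_mulVec]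
  have hconj : L + ρ • vecMulVec v v - t • 1 =
      U * (diagonal (fun i => lam i - t) + vecMulVec (ρ • z) z) * Uᵀ := by
    rw [Matrix.mul_add, Matrix.add_mul, mul_diagonal_sub_mul_transpose hU', ← hLd, hv,
      vecMulVec_mulVec_mulVec, smul_vecMulVec, Matrix.mul_smul, Matrix.smul_mul]
    abel
  calc ∏ j, (tlam j - t) = det (tU * diagonal (fun j => tlam j - t) * tUᵀ) := by
        rw [det_mul_mul_transpose htU, det_diagonal]
    _ = det (L + ρ • vecMulVec v v - t • 1) := by
        rw [mul_diagonal_sub_mul_transpose (mul_eq_one_comm.mp htU), htLd]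
    _ = _ := by rw [hconj, det_mul_mul_transpose hU]

/-- `∏ i, (lam i - t)` times the secular function `1 + ∑ i, w i / (lam i - t)`, cleared of
denominators; for `w i = ρ * z i ^ 2` it is `det (diagonal lam + ρ • vecMulVec z z - t • 1)`. -/
noncomputable def secularPoly {ι : Type*} [Fintype ι] [DecidableEq ι] (lam w : ι → ℝ)
    (t : ℝ) : ℝ :=
  ∏ i, (lam i - t) + ∑ i, w i * ∏ k ∈ univ.erase i, (lam k - t)

section secularPoly

variable {ι : Type*} [Fintype ι] [DecidableEq ι] {lam w : ι → ℝ}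

theorem continuous_secularPoly : Continuous (secularPoly lam w) := by
  unfold secularPoly
  fun_prop

theorem secularPoly_eq_prod_mul {t : ℝ} (ht : ∀ i, lam i ≠ t) :
    secularPoly lam w t = (∏ i, (lam i - t)) * (1 + ∑ i, w i / (lam i - t)) := by
  rw [secularPoly, mul_add, mul_one, mul_sum]
  congr 1
  refine sum_congr rfl fun i _ => ?_
  rw [← mul_prod_erase univ (fun k => lam k - t) (mem_univ i)]
  field_simp [sub_ne_zero.mpr (ht i)]

theorem secularPoly_apply_self (i : ι) :
    secularPoly lam w (lam i) = w i * ∏ k ∈ univ.erase i, (lam k - lam i) := by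
  rw [secularPoly, prod_eq_zero (mem_univ i) (sub_self _), zero_add]
  refine sum_eq_single i (fun j _ hji => ?_) (absurd (mem_univ i))
  rw [prod_eq_zero (mem_erase.mpr ⟨Ne.symm hji, mem_univ i⟩) (sub_self _), mul_zero]

theorem neg_one_pow_card_mul_secularPoly_nonneg (hw : ∀ i, 0 ≤ w i) (hw_sum : 0 < ∑ i, w i)
    {t : ℝ} (ht : ∀ i, lam i + ∑ j, w j ≤ t) :
    0 ≤ (-1) ^ Fintype.card ι * secularPoly lam w t := by
  have hgap : ∀ i, ∑ j, w j ≤ t - lam i := fun i => by linarith [ht i]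
  have hlt : ∀ i, lam i < t := fun i => by linarith [hgap i]
  have hsum : ∑ i, w i / (t - lam i) ≤ 1 := by
    calc ∑ i, w i / (t - lam i) ≤ ∑ i, w i / ∑ j, w j :=
          sum_le_sum fun i _ => div_le_div_of_nonneg_left (hw i) hw_sum (hgap i)
      _ = 1 := by rw [← sum_div, div_self hw_sum.ne']
  rw [secularPoly_eq_prod_mul fun i => (hlt i).ne, ← mul_assoc, ← card_univ, ← prod_neg]
  refine mul_nonneg (prod_nonneg fun i _ => by linarith [hlt i]) ?_
  have hflip : ∑ i, w i / (lam i - t) = -∑ i, w i / (t - lam i) := by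
    rw [← sum_neg_distrib]
    exact sum_congr rfl fun i _ => by rw [← div_neg, neg_sub]
  linarith

end secularPoly

theorem neg_one_pow_mul_prod_erase_sub_pos {m : ℕ} {a : Fin m → ℝ} (ha : StrictMono a)
    (i : Fin m) : 0 < (-1) ^ (i : ℕ) * ∏ k ∈ univ.erase i, (a k - a i) := by
  rw [← compl_singleton, ← Ioi_disjUnion_Iio, prod_disjUnion]
  have hbelow : ∏ k ∈ Iio i, (a k - a i) = (-1) ^ (i : ℕ) * ∏ k ∈ Iio i, (a i - a k) := by
    rw [← Fin.card_Iio i, ← prod_neg]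
    simp only [neg_sub]
  have hsq : ((-1 : ℝ) ^ (i : ℕ)) * (-1) ^ (i : ℕ) = 1 := by rw [← mul_pow]; norm_num
  have hpos_above : 0 < ∏ k ∈ Ioi i, (a k - a i) :=
    prod_pos fun k hk => sub_pos.mpr (ha (mem_Ioi.mp hk))
  have hpos_below : 0 < ∏ k ∈ Iio i, (a i - a k) :=
    prod_pos fun k hk => sub_pos.mpr (ha (mem_Iio.mp hk))
  rw [hbelow, mul_left_comm, ← mul_assoc ((-1 : ℝ) ^ (i : ℕ)), hsq, one_mul]
  exact mul_pos hpos_above hpos_below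

theorem neg_one_pow_mul_secularPoly_apply_pos {m : ℕ} {lam w : Fin m → ℝ} (hlam : StrictMono lam)
    (hw : ∀ i, 0 < w i) (i : Fin m) : 0 < (-1) ^ (i : ℕ) * secularPoly lam w (lam i) := by
  rw [secularPoly_apply_self, mul_left_comm]
  exact mul_pos (hw i) (neg_one_pow_mul_prod_erase_sub_pos hlam i)

theorem exists_mem_Icc_eq_zero_of_mul_nonpos {f : ℝ → ℝ} {a b : ℝ} (hab : a ≤ b)
    (hf : ContinuousOn f (Set.Icc a b)) (hfab : f a * f b ≤ 0) : ∃ c ∈ Set.Icc a b, f c = 0 := by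
  rcases mul_nonpos_iff.mp hfab with ⟨hfa, hfb⟩ | ⟨hfa, hfb⟩
  · exact intermediate_value_Icc' hab hf ⟨hfb, hfa⟩
  · exact intermediate_value_Icc hab hf ⟨hfa, hfb⟩

theorem mul_nonpos_of_neg_one_pow_mul_nonneg {x y : ℝ} (k : ℕ) (hx : 0 ≤ (-1) ^ k * x)
    (hy : 0 ≤ (-1) ^ (k + 1) * y) : x * y ≤ 0 := by
  have hsign : (-1 : ℝ) ^ k * (-1) ^ (k + 1) = -1 := by
    rw [← pow_add, Odd.neg_one_pow ⟨k, by ring⟩]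
  nlinarith [mul_nonneg hx hy]

theorem exists_zero_of_alternating_sign {n : ℕ} {f : ℝ → ℝ} (hf : Continuous f)
    {a : Fin (n + 1) → ℝ} (ha : StrictMono a)
    (hsign : ∀ i : Fin (n + 1), 0 < (-1) ^ (i : ℕ) * f (a i))
    {T : ℝ} (hT : a (Fin.last n) < T) (hfT : 0 ≤ (-1) ^ (n + 1) * f T) (i : Fin (n + 1)) :
    ∃ c ∈ Set.Ioc (a i) T, f c = 0 ∧ ∀ j, i < j → c < a j := by
  have hne : ∀ j, f (a j) ≠ 0 := fun j h => (hsign j).ne' (by rw [h, mul_zero])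
  induction i using Fin.lastCases with
  | last =>
    have hprod : f (a (Fin.last n)) * f T ≤ 0 :=
      mul_nonpos_of_neg_one_pow_mul_nonneg n (by simpa using (hsign (Fin.last n)).le) hfT
    obtain ⟨c, hc, hfc⟩ := exists_mem_Icc_eq_zero_of_mul_nonpos hT.le hf.continuousOn hprod
    refine ⟨c, ⟨hc.1.lt_of_ne ?_, hc.2⟩, hfc, fun j hj => absurd hj (Fin.le_last j).not_gt⟩
    rintro rfl
    exact hne _ hfc
  | cast i =>
    have hprod : f (a i.castSucc) * f (a i.succ) ≤ 0 :=
      mul_nonpos_of_neg_one_pow_mul_nonneg i (by simpa using (hsign i.castSucc).le)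
        (by simpa using (hsign i.succ).le)
    have hgap : a i.castSucc < a i.succ := ha Fin.castSucc_lt_succ
    obtain ⟨c, hc, hfc⟩ :=
      exists_mem_Icc_eq_zero_of_mul_nonpos hgap.le hf.continuousOn hprod
    have hc_lt : c < a i.succ := hc.2.lt_of_ne fun h => hne _ (h ▸ hfc)
    refine ⟨c, ⟨hc.1.lt_of_ne ?_, ?_⟩, hfc, fun j hj => ?_⟩
    · rintro rfl
      exact hne _ hfc
    · exact (hc_lt.trans_le (ha.monotone (Fin.le_last _))).le.trans hT.le
    · exact hc_lt.trans_le (ha.monotone (Fin.castSucc_lt_iff_succ_le.mp hj))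

theorem Monotone.eq_of_strictMono_of_forall_mem_range {α β : Type*} [LinearOrder α] [Finite α]
    [LinearOrder β] {f g : α → β} (hf : Monotone f) (hg : StrictMono g)
    (hgf : ∀ i, g i ∈ Set.range f) : f = g := by
  choose σ hσ using hgf
  have hσ_mono : StrictMono σ := fun i j hij => hf.reflect_lt (by rw [hσ, hσ]; exact hg hij)
  funext i
  rw [← hσ, hσ_mono.apply_eq]

/-- Rank-one update setting, generic assumptions (`λ` pairwise distinct, `z_i ≠ 0`
for all `i`), `ρ > 0`: the interleaving is strict, `λ_i < λ̃_i` and `λ̃_i < λ_{i+1}`;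
in particular the eigenvalues of `L̃` are pairwise distinct, no `λ̃_j` equals any
`λ_i`, and `λ̃_n ≤ λ_n + ρ ‖z‖₂²`. -/
theorem rank_one_update_strict_interleaving
    {n : ℕ} (L U tU : Matrix (Fin (n + 1)) (Fin (n + 1)) ℝ)
    (lam tlam : Fin (n + 1) → ℝ)
    (hU : Uᵀ * U = 1)
    (hLd : L = U * Matrix.diagonal lam * Uᵀ)
    (hlam : StrictMono lam)
    (ρ : ℝ) (hρ : 0 < ρ) (v : Fin (n + 1) → ℝ)
    (z : Fin (n + 1) → ℝ) (hz_def : z = Uᵀ.mulVec v)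
    (hz : ∀ i, z i ≠ 0)
    (htU : tUᵀ * tU = 1)
    (htLd : L + ρ • vecMulVec v v = tU * Matrix.diagonal tlam * tUᵀ)
    (htmono : Monotone tlam) :
    (∀ j : Fin (n + 1), lam j < tlam j) ∧
    (∀ i : Fin n, tlam i.castSucc < lam i.succ) ∧
    (∀ j j' : Fin (n + 1), j ≠ j' → tlam j ≠ tlam j') ∧
    (∀ j i : Fin (n + 1), tlam j ≠ lam i) ∧
    tlam (Fin.last n) ≤ lam (Fin.last n) + ρ * ∑ i, z i ^ 2 := by
  set w : Fin (n + 1) → ℝ := fun i => ρ * z i ^ 2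
  have hw : ∀ i, 0 < w i := fun i => mul_pos hρ (pow_two_pos_of_ne_zero (hz i))
  have hw_sum : 0 < ∑ i, w i := sum_pos (fun i _ => hw i) univ_nonempty
  have hchar : ∀ t, (∀ i, lam i ≠ t) → ∏ j, (tlam j - t) = secularPoly lam w t := fun t ht => by
    rw [prod_sub_eq_det_diagonal_add_vecMulVec hU hLd hz_def htU htLd,
      det_diagonal_add_vecMulVec (fun i => sub_ne_zero.mpr (ht i)), secularPoly_eq_prod_mul ht]
    simp only [Pi.smul_apply, smul_eq_mul, w, mul_assoc, sq]
  have hsign := neg_one_pow_mul_secularPoly_apply_pos hlam hw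
  have htop := neg_one_pow_card_mul_secularPoly_nonneg (fun i => (hw i).le) hw_sum
    fun i => add_le_add_left (hlam.monotone (Fin.le_last i)) (∑ j, w j)
  rw [Fintype.card_fin] at htop
  choose r hr_mem hr_zero hr_lt using exists_zero_of_alternating_sign continuous_secularPoly hlam
    hsign (lt_add_of_pos_right _ hw_sum) htop
  have hr_ne : ∀ i k, r i ≠ lam k := fun i k h => (hsign k).ne' (by rw [← h, hr_zero, mul_zero])
  have hr_range : ∀ i, r i ∈ Set.range tlam := fun i => by
    obtain ⟨j, -, hj⟩ := prod_eq_zero_iff.mp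
      ((hchar (r i) fun k => (hr_ne i k).symm).trans (hr_zero i))
    exact ⟨j, sub_eq_zero.mp hj⟩
  have hr_mono : StrictMono r := fun i j hij => (hr_lt i j hij).trans (hr_mem j).1
  obtain rfl : tlam = r := htmono.eq_of_strictMono_of_forall_mem_range hr_mono hr_range
  exact ⟨fun j => (hr_mem j).1, fun i => hr_lt _ _ Fin.castSucc_lt_succ,
    fun j j' => hr_mono.injective.ne, hr_ne, (hr_mem _).2.trans_eq (by rw [mul_sum])⟩
end

section
/- In the rank-one update setting, under the generic assumptions and with ρ > 0, the secular function f(μ) = 1 + ρ Σ_{i=1}^n z_i² / (λ_i − μ) has exactly one zero in each open interval (λ_i, λ_{i+1}) for i = 1,…,n−1, and exactly one zero in the interval (λ_n, λ_n + ρ ‖z‖₂²]; moreover these n zeros are precisely the eigenvalues of L̃ = L + ρ v vᵀ. -/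
/-!
In the eigenbasis of `L` the update becomes `diag λ + ρ z zᵀ`, and `(diag λ + ρ z zᵀ) w = μ w`
reads `(λ_k - μ) w_k = -ρ (zᵀw) z_k` for every `k`. Since the `λ_k` are distinct and no `z_k`
vanishes this forces `zᵀw ≠ 0` and `μ ≠ λ_k`, and then summing `z_k w_k` gives `f(μ) = 0`;
conversely a zero `μ` of `f` off the poles yields the eigenvector `w_k = z_k / (λ_k - μ)`.
Between two consecutive poles `f` is continuous and strictly increasing from `-∞` to `+∞`, so it has
exactly one zero there. Right of `λ_n` it increases from `-∞`, and since each term is at least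
`-z_k² / (μ - λ_n)`, it is nonnegative at `λ_n + ρ‖z‖²` and positive beyond; left of `λ_1` it
exceeds `1`.
-/

open Matrix Finset Filter Topology Set

/-- At a pole `μ = lam k` the `k`-th term is `z k ^ 2 / 0 = 0`. -/
def secularFunction {ι K : Type*} [Fintype ι] [Field K] (ρ : K) (lam z : ι → K) (μ : K) : K :=
  1 + ρ * ∑ k, z k ^ 2 / (lam k - μ)

theorem StrictMonoOn.existsUnique_of_mem {α β : Type*} [LinearOrder α] [Preorder β] {f : α → β}
    {s : Set α} (hf : StrictMonoOn f s) {x : α} {y : β} (hx : x ∈ s) (hfx : f x = y) :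
    ∃! x, x ∈ s ∧ f x = y :=
  ⟨x, ⟨hx, hfx⟩, fun _ ⟨hx', hfx'⟩ => hf.injOn hx' hx (hfx'.trans hfx.symm)⟩

theorem Monotone.le_castSucc_or_succ_le {α : Type*} [Preorder α] {n : ℕ} {a : Fin (n + 1) → α}
    (ha : Monotone a) (i : Fin n) (k : Fin (n + 1)) : a k ≤ a i.castSucc ∨ a i.succ ≤ a k :=
  (le_or_gt k i.castSucc).imp (fun h => ha h) fun h => ha (Fin.castSucc_lt_iff_succ_le.1 h)

theorem StrictMono.mem_iUnion_Ioo_union_Ioi_iff {α : Type*} [LinearOrder α] {n : ℕ}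
    {a : Fin (n + 1) → α} (ha : StrictMono a) {x : α} :
    x ∈ (⋃ i : Fin n, Ioo (a i.castSucc) (a i.succ)) ∪ Ioi (a (Fin.last n)) ↔
      a 0 < x ∧ ∀ k, a k ≠ x := by
  constructor
  · rintro (hx | hx)
    · obtain ⟨i, hi⟩ := mem_iUnion.1 hx
      refine ⟨(ha.monotone (Fin.zero_le _)).trans_lt hi.1, fun k => ?_⟩
      rcases ha.monotone.le_castSucc_or_succ_le i k with h | h
      exacts [(h.trans_lt hi.1).ne, (hi.2.trans_le h).ne']
    · exact ⟨(ha.monotone (Fin.zero_le _)).trans_lt hx,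
        fun k => ((ha.monotone (Fin.le_last k)).trans_lt hx).ne⟩
  · rintro ⟨h0, hx⟩
    by_cases hlast : a (Fin.last n) < x
    · exact Or.inr hlast
    obtain ⟨j, hj, hmin⟩ := wellFounded_lt.has_min {k | x < a k}
      ⟨Fin.last n, lt_of_le_of_ne (not_lt.1 hlast) (hx _).symm⟩
    obtain ⟨i, rfl⟩ := Fin.exists_succ_eq.2 (ne_of_apply_ne a (hj.trans' h0).ne')
    refine Or.inl (mem_iUnion.2 ⟨i, lt_of_le_of_ne (not_lt.1 fun h => ?_) (hx _), hj⟩)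
    exact hmin _ h Fin.castSucc_lt_succ

section Eigenvectors

variable {ι : Type*} [Fintype ι] {K : Type*} [Field K] {lam z : ι → K} {ρ μ : K}

theorem dotProduct_div_sub (z lam : ι → K) (μ : K) :
    z ⬝ᵥ (fun k => z k / (lam k - μ)) = ∑ k, z k ^ 2 / (lam k - μ) := by
  simp only [dotProduct, sq, mul_div_assoc]

theorem dotProduct_ne_zero_of_forall_sub_mul_eq (hlam : Function.Injective lam)
    (hz : ∀ k, z k ≠ 0) {w : ι → K} (hw0 : w ≠ 0)
    (hw : ∀ k, (lam k - μ) * w k = -(ρ * (z ⬝ᵥ w) * z k)) : z ⬝ᵥ w ≠ 0 := by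
  intro hc
  obtain ⟨j, hj⟩ := Function.ne_iff.1 hw0
  have hμ : lam j = μ :=
    (by simpa [hc, sub_eq_zero] using hw j : lam j = μ ∨ w j = 0).resolve_right hj
  have hsupp : ∀ k ≠ j, w k = 0 := fun k hk => by
    simpa [hc, sub_eq_zero, ← hμ, hlam.ne hk] using hw k
  have : z ⬝ᵥ w = z j * w j :=
    Finset.sum_eq_single j (fun k _ hk => by rw [hsupp k hk, mul_zero]) (by simp)
  exact mul_ne_zero (hz j) hj (this ▸ hc)

variable [DecidableEq ι]

theorem exists_mulVec_eq_smul_conj_iff {R : Type*} [CommRing R] {U N : Matrix ι ι R}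
    (hU : Uᵀ * U = 1) (μ : R) :
    (∃ x ≠ 0, (U * N * Uᵀ) *ᵥ x = μ • x) ↔ ∃ w ≠ 0, N *ᵥ w = μ • w := by
  have hU' : U * Uᵀ = 1 := mul_eq_one_comm.mp hU
  constructor
  · rintro ⟨x, hx, hNx⟩
    refine ⟨Uᵀ *ᵥ x, fun h => hx ?_, ?_⟩
    · rw [← one_mulVec x, ← hU', ← mulVec_mulVec, h, mulVec_zero]
    · rw [← mulVec_smul, ← hNx, mulVec_mulVec, mulVec_mulVec, ← Matrix.mul_assoc,
        ← Matrix.mul_assoc, hU, Matrix.one_mul]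
  · rintro ⟨w, hw, hNw⟩
    refine ⟨U *ᵥ w, fun h => hw ?_, ?_⟩
    · rw [← one_mulVec w, ← hU, ← mulVec_mulVec, h, mulVec_zero]
    · rw [← mulVec_smul, ← hNw, mulVec_mulVec, mulVec_mulVec, Matrix.mul_assoc, hU,
        Matrix.mul_one]

theorem exists_mulVec_eq_smul_rankOne_update_iff {R : Type*} [CommRing R]
    {L U : Matrix ι ι R} {lam : ι → R} (hU : Uᵀ * U = 1) (hL : L = U * diagonal lam * Uᵀ)
    (ρ : R) (v : ι → R) (μ : R) :
    (∃ x ≠ 0, (L + ρ • vecMulVec v v) *ᵥ x = μ • x) ↔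
      ∃ w ≠ 0, (diagonal lam + ρ • vecMulVec (Uᵀ *ᵥ v) (Uᵀ *ᵥ v)) *ᵥ w = μ • w := by
  have hv : U *ᵥ (Uᵀ *ᵥ v) = v := by
    rw [mulVec_mulVec, mul_eq_one_comm.mp hU, one_mulVec]
  have hconj : L + ρ • vecMulVec v v =
      U * (diagonal lam + ρ • vecMulVec (Uᵀ *ᵥ v) (Uᵀ *ᵥ v)) * Uᵀ := by
    rw [Matrix.mul_add, Matrix.add_mul, ← hL, Matrix.mul_smul, Matrix.smul_mul, mul_vecMulVec,
      vecMulVec_mul, vecMul_transpose, hv]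
  rw [hconj, exists_mulVec_eq_smul_conj_iff hU]

theorem diagonal_add_vecMulVec_mulVec_eq_smul_iff (w : ι → K) :
    (diagonal lam + ρ • vecMulVec z z) *ᵥ w = μ • w ↔
      ∀ k, (lam k - μ) * w k = -(ρ * (z ⬝ᵥ w) * z k) := by
  have hrow : ∀ k, ((diagonal lam + ρ • vecMulVec z z) *ᵥ w) k =
      lam k * w k + ρ * (z ⬝ᵥ w) * z k := fun k => by
    rw [add_mulVec, smul_mulVec, vecMulVec_mulVec]
    simp [mulVec_diagonal, mul_comm, mul_left_comm]
  simp only [funext_iff, hrow, Pi.smul_apply, smul_eq_mul]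
  exact forall_congr' fun k => ⟨fun h => by linear_combination h, fun h => by linear_combination h⟩

theorem exists_mulVec_diagonal_add_vecMulVec_eq_smul_iff (hlam : Function.Injective lam)
    (hρ : ρ ≠ 0) (hz : ∀ k, z k ≠ 0) :
    (∃ w ≠ 0, (diagonal lam + ρ • vecMulVec z z) *ᵥ w = μ • w) ↔
      (∀ k, lam k ≠ μ) ∧ secularFunction ρ lam z μ = 0 := by
  simp only [diagonal_add_vecMulVec_mulVec_eq_smul_iff]
  constructor
  · rintro ⟨w, hw0, hw⟩
    set c := z ⬝ᵥ w with hc_def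
    have hc : c ≠ 0 := dotProduct_ne_zero_of_forall_sub_mul_eq hlam hz hw0 hw
    have hpole : ∀ k, lam k ≠ μ := fun k hk => by
      have := hw k
      rw [hk, sub_self, zero_mul, eq_comm, neg_eq_zero] at this
      exact mul_ne_zero (mul_ne_zero hρ hc) (hz k) this
    refine ⟨hpole, ?_⟩
    have hwk : ∀ k, w k = -(ρ * c * z k) / (lam k - μ) := fun k =>
      eq_div_of_mul_eq (sub_ne_zero.2 (hpole k)) (by rw [mul_comm]; exact hw k)
    have hcf : c * secularFunction ρ lam z μ = 0 := by
      have : c = -(ρ * c) * ∑ k, z k ^ 2 / (lam k - μ) := by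
        conv_lhs => rw [hc_def, dotProduct]
        rw [Finset.mul_sum]
        exact Finset.sum_congr rfl fun k _ => by rw [hwk k]; ring
      unfold secularFunction
      linear_combination this
    exact (mul_eq_zero.1 hcf).resolve_left hc
  · rintro ⟨hpole, hf⟩
    unfold secularFunction at hf
    refine ⟨fun k => z k / (lam k - μ), fun h => ?_, fun k => ?_⟩
    · rw [← dotProduct_div_sub, h, dotProduct_zero] at hf
      simp at hf
    · rw [dotProduct_div_sub, mul_div_cancel₀ _ (sub_ne_zero.2 (hpole k))]
      linear_combination z k * hf

end Eigenvectors

section Real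

theorem strictMonoOn_div_sub_Iio {c : ℝ} (hc : 0 < c) (l : ℝ) :
    StrictMonoOn (fun μ => c / (l - μ)) (Iio l) := fun _ _ _ hμ' h =>
  div_lt_div_of_pos_left hc (sub_pos.2 hμ') (by linarith)

theorem strictMonoOn_div_sub_Ioi {c : ℝ} (hc : 0 < c) (l : ℝ) :
    StrictMonoOn (fun μ => c / (l - μ)) (Ioi l) := fun μ hμ μ' _ h => by
  have : c / (μ' - l) < c / (μ - l) := div_lt_div_of_pos_left hc (sub_pos.2 hμ) (by linarith)
  simp only [← neg_sub μ, ← neg_sub μ', div_neg]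
  linarith

theorem tendsto_div_sub_nhdsGT {c : ℝ} (hc : 0 < c) (l : ℝ) :
    Tendsto (fun μ => c / (l - μ)) (𝓝[>] l) atBot := by
  have h : Tendsto (fun μ => l - μ) (𝓝[>] l) (𝓝[<] 0) := by
    refine tendsto_nhdsWithin_iff.2
      ⟨?_, eventually_mem_nhdsWithin.mono fun μ (hμ : l < μ) => sub_neg.2 hμ⟩
    exact ((continuous_const.sub continuous_id).tendsto' l 0 (sub_self l)).mono_left
      nhdsWithin_le_nhds
  simpa [div_eq_mul_inv] using h.inv_tendsto_nhdsLT_zero.const_mul_atBot hc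

theorem tendsto_div_sub_nhdsLT {c : ℝ} (hc : 0 < c) (l : ℝ) :
    Tendsto (fun μ => c / (l - μ)) (𝓝[<] l) atTop := by
  have h : Tendsto (fun μ => l - μ) (𝓝[<] l) (𝓝[>] 0) := by
    refine tendsto_nhdsWithin_iff.2
      ⟨?_, eventually_mem_nhdsWithin.mono fun μ (hμ : μ < l) => sub_pos.2 hμ⟩
    exact ((continuous_const.sub continuous_id).tendsto' l 0 (sub_self l)).mono_left
      nhdsWithin_le_nhds
  simpa [div_eq_mul_inv] using h.inv_tendsto_nhdsGT_zero.const_mul_atTop hc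

variable {ι : Type*} [Fintype ι] {ρ μ : ℝ} {lam z : ι → ℝ}

theorem one_le_secularFunction (hρ : 0 ≤ ρ) (hμ : ∀ k, μ ≤ lam k) :
    1 ≤ secularFunction ρ lam z μ :=
  le_add_of_nonneg_right <| mul_nonneg hρ <|
    Finset.sum_nonneg fun k _ => div_nonneg (sq_nonneg _) (sub_nonneg.2 (hμ k))

theorem one_sub_le_secularFunction (hρ : 0 ≤ ρ) {m : ℝ} (hm : ∀ k, lam k ≤ m) (hμ : m < μ) :
    1 - ρ * (∑ k, z k ^ 2) / (μ - m) ≤ secularFunction ρ lam z μ := by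
  have hterm : ∀ k, -(z k ^ 2 / (μ - m)) ≤ z k ^ 2 / (lam k - μ) := fun k => by
    rw [← neg_sub μ, div_neg, neg_le_neg_iff]
    exact div_le_div_of_nonneg_left (sq_nonneg _) (sub_pos.2 hμ) (by linarith [hm k])
  have hsum := Finset.sum_le_sum fun k (_ : k ∈ Finset.univ) => hterm k
  rw [Finset.sum_neg_distrib, ← Finset.sum_div] at hsum
  unfold secularFunction
  nlinarith [mul_le_mul_of_nonneg_left hsum hρ, mul_div_assoc ρ (∑ k, z k ^ 2) (μ - m)]

theorem exists_lt_of_secularFunction_eq_zero (hρ : 0 ≤ ρ) (h : secularFunction ρ lam z μ = 0) :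
    ∃ k, lam k < μ := by
  by_contra! hμ
  linarith [one_le_secularFunction (z := z) hρ hμ]

theorem le_of_secularFunction_eq_zero (hρ : 0 ≤ ρ) {m : ℝ} (hm : ∀ k, lam k ≤ m)
    (h : secularFunction ρ lam z μ = 0) : μ ≤ m + ρ * ∑ k, z k ^ 2 := by
  by_contra! hμ
  have hs : 0 ≤ ρ * ∑ k, z k ^ 2 := mul_nonneg hρ (Finset.sum_nonneg fun k _ => sq_nonneg _)
  have hlt : ρ * (∑ k, z k ^ 2) / (μ - m) < 1 := (div_lt_one (by linarith)).2 (by linarith)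
  linarith [one_sub_le_secularFunction (z := z) hρ hm (by linarith : m < μ)]

theorem continuousOn_secularFunction {S : Set ℝ} (hS : ∀ μ ∈ S, ∀ k, lam k ≠ μ) :
    ContinuousOn (secularFunction ρ lam z) S := by
  unfold secularFunction
  fun_prop (disch := exact fun μ hμ => sub_ne_zero.2 (hS μ hμ _))

theorem secularFunction_strictMonoOn [Nonempty ι] (hρ : 0 < ρ) (hz : ∀ k, z k ≠ 0) {S : Set ℝ}
    (hS : ∀ k, S ⊆ Iio (lam k) ∨ S ⊆ Ioi (lam k)) :
    StrictMonoOn (secularFunction ρ lam z) S := fun μ hμ μ' hμ' h => by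
  have hterm : ∀ k, z k ^ 2 / (lam k - μ) < z k ^ 2 / (lam k - μ') := fun k => by
    rcases hS k with hk | hk
    · exact strictMonoOn_div_sub_Iio (sq_pos_of_ne_zero (hz k)) _ (hk hμ) (hk hμ') h
    · exact strictMonoOn_div_sub_Ioi (sq_pos_of_ne_zero (hz k)) _ (hk hμ) (hk hμ') h
  unfold secularFunction
  gcongr 1 + ρ * ?_
  exact Finset.sum_lt_sum_of_nonempty univ_nonempty fun k _ => hterm k

theorem secularFunction_eq_add_erase [DecidableEq ι] (j : ι) (μ : ℝ) :
    secularFunction ρ lam z μ =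
      (1 + ρ * ∑ k ∈ Finset.univ.erase j, z k ^ 2 / (lam k - μ)) + ρ * z j ^ 2 / (lam j - μ) := by
  rw [secularFunction, ← Finset.add_sum_erase _ _ (Finset.mem_univ j)]
  ring

theorem continuousAt_sum_erase_div_sub [DecidableEq ι] (hlam : Function.Injective lam) (j : ι) :
    ContinuousAt (fun μ => ∑ k ∈ Finset.univ.erase j, z k ^ 2 / (lam k - μ)) (lam j) :=
  tendsto_finsetSum _ fun _ hk => tendsto_const_nhds.div (tendsto_const_nhds.sub tendsto_id)
    (sub_ne_zero.2 (hlam.ne (Finset.ne_of_mem_erase hk)))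

theorem tendsto_secularFunction_nhdsGT (hρ : 0 < ρ) (hlam : Function.Injective lam) {j : ι}
    (hz : z j ≠ 0) : Tendsto (secularFunction ρ lam z) (𝓝[>] lam j) atBot := by
  classical
  rw [funext (secularFunction_eq_add_erase j)]
  exact ((((continuousAt_sum_erase_div_sub hlam j).const_mul ρ).const_add 1).mono_left
    nhdsWithin_le_nhds).add_atBot (tendsto_div_sub_nhdsGT (mul_pos hρ (sq_pos_of_ne_zero hz)) _)

theorem tendsto_secularFunction_nhdsLT (hρ : 0 < ρ) (hlam : Function.Injective lam) {j : ι}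
    (hz : z j ≠ 0) : Tendsto (secularFunction ρ lam z) (𝓝[<] lam j) atTop := by
  classical
  rw [funext (secularFunction_eq_add_erase j)]
  exact ((((continuousAt_sum_erase_div_sub hlam j).const_mul ρ).const_add 1).mono_left
    nhdsWithin_le_nhds).add_atTop (tendsto_div_sub_nhdsLT (mul_pos hρ (sq_pos_of_ne_zero hz)) _)

theorem existsUnique_secularFunction_eq_zero_Ioo (hρ : 0 < ρ) (hlam : Function.Injective lam)
    (hz : ∀ k, z k ≠ 0) {i j : ι} (hij : lam i < lam j)
    (hgap : ∀ k, lam k ≤ lam i ∨ lam j ≤ lam k) :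
    ∃! μ, μ ∈ Ioo (lam i) (lam j) ∧ secularFunction ρ lam z μ = 0 := by
  have : Nonempty ι := ⟨i⟩
  have hS : ∀ k, Ioo (lam i) (lam j) ⊆ Iio (lam k) ∨ Ioo (lam i) (lam j) ⊆ Ioi (lam k) :=
    fun k => (hgap k).symm.imp (fun h _ hμ => hμ.2.trans_le h) fun h _ hμ => h.trans_lt hμ.1
  have hcont : ContinuousOn (secularFunction ρ lam z) (Ioo (lam i) (lam j)) :=
    continuousOn_secularFunction fun μ hμ k => (hS k).elim (fun h => (h hμ).ne') fun h => (h hμ).ne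
  obtain ⟨μ, hμ, h0⟩ := hcont.surjOn_of_tendsto (Set.nonempty_Ioo.2 hij)
    (by rw [tendsto_comp_coe_Ioo_atBot hij]; exact tendsto_secularFunction_nhdsGT hρ hlam (hz i))
    (by rw [tendsto_comp_coe_Ioo_atTop hij]; exact tendsto_secularFunction_nhdsLT hρ hlam (hz j))
    (mem_univ 0)
  exact (secularFunction_strictMonoOn hρ hz hS).existsUnique_of_mem hμ h0

theorem existsUnique_secularFunction_eq_zero_Ioc (hρ : 0 < ρ) (hlam : Function.Injective lam)
    (hz : ∀ k, z k ≠ 0) {j : ι} (hmax : ∀ k, lam k ≤ lam j) :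
    ∃! μ, μ ∈ Ioc (lam j) (lam j + ρ * ∑ k, z k ^ 2) ∧ secularFunction ρ lam z μ = 0 := by
  have : Nonempty ι := ⟨j⟩
  set b := lam j + ρ * ∑ k, z k ^ 2 with hb_def
  have hρs : 0 < ρ * ∑ k, z k ^ 2 :=
    mul_pos hρ (Finset.sum_pos (fun k _ => sq_pos_of_ne_zero (hz k)) Finset.univ_nonempty)
  have hjb : lam j < b := by linarith
  have hS : ∀ k, Ioc (lam j) b ⊆ Iio (lam k) ∨ Ioc (lam j) b ⊆ Ioi (lam k) :=
    fun k => Or.inr fun _ hμ => (hmax k).trans_lt hμ.1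
  have hb : 0 ≤ secularFunction ρ lam z b := by
    simpa [hb_def, hρs.ne'] using one_sub_le_secularFunction (z := z) hρ.le hmax hjb
  obtain ⟨a, ha0, hab, hja⟩ : ∃ a, secularFunction ρ lam z a < 0 ∧ a < b ∧ lam j < a :=
    (((tendsto_secularFunction_nhdsGT hρ hlam (hz j)).eventually (eventually_lt_atBot 0)).and
      (((eventually_lt_nhds hjb).filter_mono nhdsWithin_le_nhds).and
        eventually_mem_nhdsWithin)).exists
  have hcont : ContinuousOn (secularFunction ρ lam z) (Ioc (lam j) b) :=
    continuousOn_secularFunction fun _ hμ k => ((hmax k).trans_lt hμ.1).ne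
  obtain ⟨μ, hμ, h0⟩ := hcont.surjOn_Icc ⟨hja, hab.le⟩ ⟨hjb, le_rfl⟩ ⟨ha0.le, hb⟩
  exact (secularFunction_strictMonoOn hρ hz hS).existsUnique_of_mem hμ h0

end Real

/-- Rank-one update setting, generic assumptions, `ρ > 0`: the secular function
`f(μ) = 1 + ρ Σ_i z_i²/(λ_i - μ)` has exactly one zero in each open interval
`(λ_i, λ_{i+1})`, and exactly one zero in `(λ_n, λ_n + ρ ‖z‖₂²]`; moreover these
zeros are precisely the eigenvalues of `L̃ = L + ρ v vᵀ`. -/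
theorem secular_function_zeros
    {n : ℕ} (L U : Matrix (Fin (n + 1)) (Fin (n + 1)) ℝ)
    (lam : Fin (n + 1) → ℝ)
    (hU : Uᵀ * U = 1)
    (hLd : L = U * Matrix.diagonal lam * Uᵀ)
    (hlam : StrictMono lam)
    (ρ : ℝ) (hρ : 0 < ρ) (v : Fin (n + 1) → ℝ)
    (z : Fin (n + 1) → ℝ) (hz_def : z = Uᵀ.mulVec v)
    (hz : ∀ i, z i ≠ 0) :
    (∀ i : Fin n, ∃! μ : ℝ,
        μ ∈ Set.Ioo (lam i.castSucc) (lam i.succ) ∧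
        1 + ρ * ∑ k, z k ^ 2 / (lam k - μ) = 0) ∧
    (∃! μ : ℝ,
        μ ∈ Set.Ioc (lam (Fin.last n)) (lam (Fin.last n) + ρ * ∑ k, z k ^ 2) ∧
        1 + ρ * ∑ k, z k ^ 2 / (lam k - μ) = 0) ∧
    (∀ μ : ℝ,
        (μ ∈ (⋃ i : Fin n, Set.Ioo (lam i.castSucc) (lam i.succ)) ∪
            Set.Ioc (lam (Fin.last n)) (lam (Fin.last n) + ρ * ∑ k, z k ^ 2) ∧
          1 + ρ * ∑ k, z k ^ 2 / (lam k - μ) = 0)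
        ↔ (∃ x : Fin (n + 1) → ℝ, x ≠ 0 ∧
            (L + ρ • vecMulVec v v).mulVec x = μ • x)) := by
  have hmax : ∀ k, lam k ≤ lam (Fin.last n) := fun k => hlam.monotone (Fin.le_last k)
  refine ⟨fun i => existsUnique_secularFunction_eq_zero_Ioo hρ hlam.injective hz
      (hlam Fin.castSucc_lt_succ) (hlam.monotone.le_castSucc_or_succ_le i),
    existsUnique_secularFunction_eq_zero_Ioc hρ hlam.injective hz hmax, fun μ => ?_⟩
  rw [exists_mulVec_eq_smul_rankOne_update_iff hU hLd, ← hz_def,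
    exists_mulVec_diagonal_add_vecMulVec_eq_smul_iff hlam.injective hρ.ne' hz]
  refine and_congr_left fun h0 => ?_
  obtain ⟨k, hk⟩ := exists_lt_of_secularFunction_eq_zero hρ.le h0
  have hlow : lam 0 < μ := (hlam.monotone (Fin.zero_le k)).trans_lt hk
  have hup : μ ≤ lam (Fin.last n) + ρ * ∑ k, z k ^ 2 :=
    le_of_secularFunction_eq_zero hρ.le hmax h0
  exact (or_congr_right ⟨fun h => h.1, fun h => ⟨h, hup⟩⟩).trans
    (hlam.mem_iUnion_Ioo_union_Ioi_iff.trans (and_iff_right hlow))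
end

section
/- In the rank-one update setting, under the generic assumptions and with ρ ≠ 0: no eigenvalue of L̃ = L + ρ v vᵀ equals any λ_i; L̃ has n pairwise distinct eigenvalues λ̃_1 < … < λ̃_n; and, setting w_j = (diag(λ) − λ̃_j I)^{-1} z (so (w_j)_i = z_i/(λ_i − λ̃_j)) and ũ_j = U w_j / ‖w_j‖₂, the vectors ũ_1,…,ũ_n form an orthonormal eigenbasis of L̃ with L̃ ũ_j = λ̃_j ũ_j. Equivalently, the matrix Ũ with columns ũ_1,…,ũ_n satisfies Ũᵀ = diag(s) C̄(λ̃, λ) diag(t) Uᵀ, where s_j = −1/‖w_j‖₂, t_i = z_i, and C̄(λ̃, λ) is the Cauchy matrix with entries C̄_{ji} = 1/(λ̃_j − λ_i). -/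
/-!
In the eigenbasis of `L` the update is `D + ρ z zᵀ` with `D = diagonal λ`. If
`(D + ρ z zᵀ) y = μ y` with `y ≠ 0`, then `(λ_i - μ) y_i = -ρ (z ⬝ y) z_i`; since the `λ_i` are
distinct and no `z_i` vanishes, this forces `z ⬝ y ≠ 0`, `μ ≠ λ_i`, `y ∥ w(μ) = (z_i / (λ_i - μ))_i`
and `f(μ) = 0` for the secular function `f(μ) = 1 + ρ ∑ z_i² / (λ_i - μ)`; conversely `w(μ)` is an
eigenvector for every root `μ`. The identity `f(μ) - f(μ') = ρ (μ - μ') w(μ) ⬝ w(μ')` makes the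
vectors of distinct roots orthogonal, so there are at most `n` roots. For `ρ > 0`, `f` runs from
`-∞` to `+∞` between consecutive poles and from `-∞` to `1` after the last one, so the intermediate
value theorem gives `n` interlacing roots. The Cauchy form is `w(μ)_i = -z_i / (μ - λ_i)`, read
entrywise.
-/

open Matrix Finset Filter Topology

noncomputable section

variable {ι : Type*}

def secularVec (lam z : ι → ℝ) (μ : ℝ) : ι → ℝ := fun i => z i / (lam i - μ)

def cauchyMatrix {κ : Type*} (x : κ → ℝ) (y : ι → ℝ) : Matrix κ ι ℝ := of fun a b => (x a - y b)⁻¹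

variable [Fintype ι]

def secularFun (ρ : ℝ) (lam z : ι → ℝ) (μ : ℝ) : ℝ := 1 + ρ * ∑ i, z i ^ 2 / (lam i - μ)

def IsSecularRoot (ρ : ℝ) (lam z : ι → ℝ) (μ : ℝ) : Prop :=
  (∀ i, lam i ≠ μ) ∧ secularFun ρ lam z μ = 0

section Algebra

variable {ρ : ℝ} {lam z : ι → ℝ} {μ μ' : ℝ}

theorem one_add_mul_dotProduct_secularVec (ρ : ℝ) (lam z : ι → ℝ) (μ : ℝ) :
    1 + ρ * (z ⬝ᵥ secularVec lam z μ) = secularFun ρ lam z μ := by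
  simp only [secularFun, secularVec, dotProduct, sq, mul_div_assoc]

theorem secularFun_sub_secularFun (ρ : ℝ) (hμ : ∀ i, lam i ≠ μ) (hμ' : ∀ i, lam i ≠ μ') :
    secularFun ρ lam z μ - secularFun ρ lam z μ'
      = ρ * (μ - μ') * (secularVec lam z μ ⬝ᵥ secularVec lam z μ') := by
  simp only [secularFun, secularVec, dotProduct, add_sub_add_left_eq_sub, ← mul_sub,
    ← sum_sub_distrib, mul_assoc, mul_sum]
  refine sum_congr rfl fun i _ => ?_
  have := sub_ne_zero.2 (hμ i)
  have := sub_ne_zero.2 (hμ' i)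
  field_simp
  ring

namespace IsSecularRoot

theorem secularVec_ne_zero (h : IsSecularRoot ρ lam z μ) : secularVec lam z μ ≠ 0 := by
  intro h0
  have := h.2
  rw [← one_add_mul_dotProduct_secularVec, h0, dotProduct_zero] at this
  simp at this

theorem dotProduct_eq_zero (h : IsSecularRoot ρ lam z μ) (h' : IsSecularRoot ρ lam z μ')
    (hne : μ ≠ μ') : secularVec lam z μ ⬝ᵥ secularVec lam z μ' = 0 := by
  have hρ : ρ ≠ 0 := by
    rintro rfl
    simpa [secularFun] using h.2
  have := secularFun_sub_secularFun (z := z) ρ h.1 h'.1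
  rw [h.2, h'.2, sub_self, eq_comm] at this
  exact (mul_eq_zero.1 this).resolve_left (mul_ne_zero hρ (sub_ne_zero.2 hne))

theorem of_neg (h : IsSecularRoot (-ρ) (fun i => -lam i) z μ) : IsSecularRoot ρ lam z (-μ) := by
  refine ⟨fun i hi => h.1 i (by simp [hi]), ?_⟩
  rw [← h.2]
  simp only [secularFun, neg_mul, ← mul_neg, ← sum_neg_distrib, ← div_neg]
  congr 2
  refine sum_congr rfl fun i _ => ?_
  ring

variable [DecidableEq ι]

theorem mulVec_secularVec (h : IsSecularRoot ρ lam z μ) :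
    (diagonal lam + ρ • vecMulVec z z) *ᵥ secularVec lam z μ = μ • secularVec lam z μ := by
  have hdot : ρ * (z ⬝ᵥ secularVec lam z μ) = -1 := by
    linarith [h.2, one_add_mul_dotProduct_secularVec ρ lam z μ]
  ext i
  have := sub_ne_zero.2 (h.1 i)
  simp only [add_mulVec, smul_mulVec, vecMulVec_mulVec, mulVec_diagonal, Pi.add_apply,
    Pi.smul_apply, smul_eq_mul, op_smul_eq_smul, ← mul_assoc, hdot, secularVec]
  field_simp
  ring

end IsSecularRoot

end Algebra

section Spectrum

variable {ρ : ℝ} {lam z : ι → ℝ}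

theorem card_le_of_isSecularRoot {κ : Type*} [Fintype κ] {s : κ → ℝ} (hs : Function.Injective s)
    (h : ∀ k, IsSecularRoot ρ lam z (s k)) : Fintype.card κ ≤ Fintype.card ι := by
  have hli : LinearIndependent ℝ fun k => WithLp.toLp 2 (secularVec lam z (s k)) :=
    linearIndependent_of_ne_zero_of_inner_eq_zero (fun k => by simpa using (h k).secularVec_ne_zero)
      fun k k' hkk' => by
        simpa [EuclideanSpace.inner_eq_star_dotProduct] using
          (h k').dotProduct_eq_zero (h k) (hs.ne hkk'.symm)
  simpa using hli.fintype_card_le_finrank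

variable [DecidableEq ι]

theorem isSecularRoot_of_mulVec_eq_smul (hlam : Function.Injective lam) (hρ : ρ ≠ 0)
    (hz : ∀ i, z i ≠ 0) {μ : ℝ} {y : ι → ℝ} (hy : y ≠ 0)
    (h : (diagonal lam + ρ • vecMulVec z z) *ᵥ y = μ • y) : IsSecularRoot ρ lam z μ := by
  set c := ρ * (z ⬝ᵥ y) with hc_def
  have hcomp : ∀ i, (lam i - μ) * y i = -(c * z i) := fun i => by
    have := congrFun h i
    simp only [add_mulVec, smul_mulVec, vecMulVec_mulVec, mulVec_diagonal, Pi.add_apply,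
      Pi.smul_apply, smul_eq_mul, op_smul_eq_smul] at this
    linear_combination this
  -- if `z ⬝ y = 0`, then `y` is an eigenvector of the diagonal part, hence a multiple of some `e_k`
  have hc : c ≠ 0 := by
    intro hc
    obtain ⟨k, hk⟩ := Function.ne_iff.1 hy
    have hμ : lam k = μ :=
      (by simpa [hc, sub_eq_zero] using hcomp k : lam k = μ ∨ y k = 0).resolve_right hk
    have hy_single : ∀ i ≠ k, y i = 0 := fun i hik => by
      simpa [hc, sub_eq_zero, ← hμ, hlam.ne hik] using hcomp i
    have : z ⬝ᵥ y = z k * y k :=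
      sum_eq_single k (fun i _ hik => by rw [hy_single i hik, mul_zero]) (by simp)
    exact mul_ne_zero hρ (mul_ne_zero (hz k) hk) (this ▸ hc)
  have hpole : ∀ i, lam i ≠ μ := fun i hi => by
    simpa [hi, hc, hz i] using hcomp i
  have hy_eq : y = (-c) • secularVec lam z μ := funext fun i => by
    have := sub_ne_zero.2 (hpole i)
    simp only [secularVec, Pi.smul_apply, smul_eq_mul]
    field_simp
    linear_combination hcomp i
  refine ⟨hpole, ?_⟩
  have hc_root : c * secularFun ρ lam z μ = 0 := by
    rw [← one_add_mul_dotProduct_secularVec]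
    have hcy := hc_def
    rw [hy_eq, dotProduct_smul, smul_eq_mul] at hcy
    linear_combination hcy
  exact (mul_eq_zero.1 hc_root).resolve_left hc

theorem exists_mulVec_eq_smul_iff (hlam : Function.Injective lam) (hρ : ρ ≠ 0)
    (hz : ∀ i, z i ≠ 0) {t : ι → ℝ} (ht : Function.Injective t)
    (hroot : ∀ j, IsSecularRoot ρ lam z (t j)) (μ : ℝ) :
    (∃ y, y ≠ 0 ∧ (diagonal lam + ρ • vecMulVec z z) *ᵥ y = μ • y) ↔ ∃ j, μ = t j := by
  refine ⟨fun ⟨y, hy, h⟩ => ?_, ?_⟩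
  · by_contra! hμ
    have hcard := card_le_of_isSecularRoot (ρ := ρ) (lam := lam) (z := z)
      (s := fun o : Option ι => o.elim μ t) ?_ ?_
    · simp at hcard
    · rintro (_ | j) (_ | j') h
      exacts [rfl, (hμ j' h).elim, (hμ j h.symm).elim, congrArg some (ht h)]
    · rintro (_ | j)
      exacts [isSecularRoot_of_mulVec_eq_smul hlam hρ hz hy h, hroot j]
  · rintro ⟨j, rfl⟩
    exact ⟨_, (hroot j).secularVec_ne_zero, (hroot j).mulVec_secularVec⟩

end Spectrum

section Roots

variable {ρ : ℝ} {lam z : ι → ℝ}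

theorem continuousOn_secularFun (ρ : ℝ) (lam z : ι → ℝ) :
    ContinuousOn (secularFun ρ lam z) {μ | ∀ i, lam i ≠ μ} := fun μ hμ => by
  refine ContinuousAt.continuousWithinAt ?_
  unfold secularFun
  fun_prop (disch := exact sub_ne_zero.2 (hμ _))

theorem secularFun_eq_add_pole [DecidableEq ι] (ρ : ℝ) (lam z : ι → ℝ) (j : ι) (μ : ℝ) :
    secularFun ρ lam z μ
      = (1 + ρ * ∑ i ∈ univ.erase j, z i ^ 2 / (lam i - μ)) + ρ * z j ^ 2 * (lam j - μ)⁻¹ := by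
  rw [secularFun, ← add_sum_erase _ _ (mem_univ j)]
  ring

theorem continuousAt_secularFun_erase [DecidableEq ι] (ρ : ℝ) (z : ι → ℝ)
    (hlam : Function.Injective lam) (j : ι) :
    ContinuousAt (fun μ => 1 + ρ * ∑ i ∈ univ.erase j, z i ^ 2 / (lam i - μ)) (lam j) := by
  refine continuousAt_const.add (continuousAt_const.mul (tendsto_finsetSum _ fun i hi => ?_))
  exact continuousAt_const.div (continuousAt_const.sub continuousAt_id)
    (sub_ne_zero.2 (hlam.ne (ne_of_mem_erase hi)))

theorem tendsto_secularFun_nhdsGT (hρ : 0 < ρ) (hlam : Function.Injective lam) {j : ι}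
    (hz : z j ≠ 0) : Tendsto (secularFun ρ lam z) (𝓝[>] lam j) atBot := by
  classical
  have hpole : Tendsto (fun μ => ρ * z j ^ 2 * (lam j - μ)⁻¹) (𝓝[>] lam j) atBot := by
    refine Tendsto.const_mul_atBot (by positivity) (tendsto_inv_nhdsLT_zero.comp ?_)
    have := (map_subLeft_nhdsGT (c := lam j) (a := lam j)).le
    rwa [sub_self] at this
  refine (((continuousAt_secularFun_erase ρ z hlam j).mono_left nhdsWithin_le_nhds).add_atBot
    hpole).congr fun μ => (secularFun_eq_add_pole ρ lam z j μ).symm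

theorem tendsto_secularFun_nhdsLT (hρ : 0 < ρ) (hlam : Function.Injective lam) {j : ι}
    (hz : z j ≠ 0) : Tendsto (secularFun ρ lam z) (𝓝[<] lam j) atTop := by
  classical
  have hpole : Tendsto (fun μ => ρ * z j ^ 2 * (lam j - μ)⁻¹) (𝓝[<] lam j) atTop := by
    refine Tendsto.const_mul_atTop (by positivity) (tendsto_inv_nhdsGT_zero.comp ?_)
    have := (map_subLeft_nhdsLT (c := lam j) (a := lam j)).le
    rwa [sub_self] at this
  refine (((continuousAt_secularFun_erase ρ z hlam j).mono_left nhdsWithin_le_nhds).add_atTop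
    hpole).congr fun μ => (secularFun_eq_add_pole ρ lam z j μ).symm

theorem tendsto_secularFun_atTop (ρ : ℝ) (lam z : ι → ℝ) :
    Tendsto (secularFun ρ lam z) atTop (𝓝 1) := by
  have hsum : Tendsto (fun μ => ∑ i, z i ^ 2 / (lam i - μ)) atTop (𝓝 0) := by
    simpa using tendsto_finsetSum univ fun i _ => tendsto_const_nhds.div_atBot
      ((tendsto_atBot_add_const_left atTop (lam i) tendsto_neg_atTop_atBot).congr
        fun μ => (sub_eq_add_neg _ _).symm)
  have := (hsum.const_mul ρ).const_add 1
  rwa [mul_zero, add_zero] at this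

variable [LinearOrder ι]

theorem exists_secularFun_eq_zero_between (hρ : 0 < ρ) (hlam : StrictMono lam)
    (hz : ∀ i, z i ≠ 0) (j : ι) :
    ∃ μ, lam j < μ ∧ (∀ i, j < i → μ < lam i) ∧ secularFun ρ lam z μ = 0 := by
  set I : Set ℝ := {μ | lam j < μ ∧ ∀ i, j < i → μ < lam i}
  have hI : IsPreconnected I := Set.OrdConnected.isPreconnected
    ⟨fun x hx y hy μ hμ => ⟨hx.1.trans_le hμ.1, fun i hi => hμ.2.trans_lt (hy.2 i hi)⟩⟩
  have hcont : ContinuousOn (secularFun ρ lam z) I :=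
    (continuousOn_secularFun ρ lam z).mono fun μ hμ i => by
      rcases le_or_gt i j with hij | hji
      · exact ((hlam.monotone hij).trans_lt hμ.1).ne
      · exact (hμ.2 i hji).ne'
  have hI_nhds : I ∈ 𝓝[>] lam j := inter_mem self_mem_nhdsWithin <| mem_nhdsWithin_of_mem_nhds <|
    eventually_all.2 fun i => by
      by_cases hji : j < i
      · exact (eventually_lt_nhds (hlam hji)).mono fun _ hμ _ => hμ
      · exact Eventually.of_forall fun _ hi => absurd hi hji
  obtain ⟨p, hp, hpI⟩ :=
    (((tendsto_secularFun_nhdsGT hρ hlam.injective (hz j)).eventually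
      (eventually_lt_atBot 0)).and hI_nhds).exists
  obtain ⟨q, hqI, hq⟩ : ∃ q ∈ I, 0 < secularFun ρ lam z q := by
    by_cases hlast : ∃ i, j < i
    · obtain ⟨k, hk, hkmin⟩ :=
        (univ.filter (j < ·)).exists_min_image lam (by simpa [Finset.Nonempty] using hlast)
      have hIk : Set.Ioo (lam j) (lam k) ⊆ I := fun μ hμ =>
        ⟨hμ.1, fun i hi => hμ.2.trans_le (hkmin i (by simpa using hi))⟩
      obtain ⟨q, hq, hqk⟩ :=
        (((tendsto_secularFun_nhdsLT hρ hlam.injective (hz k)).eventually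
          (eventually_gt_atTop 0)).and (Ioo_mem_nhdsLT (hlam (by simpa using hk)))).exists
      exact ⟨q, hIk hqk, hq⟩
    · obtain ⟨q, hq, hjq⟩ := (((tendsto_secularFun_atTop ρ lam z).eventually
        (lt_mem_nhds one_pos)).and (eventually_gt_atTop (lam j))).exists
      exact ⟨q, ⟨hjq, fun i hi => absurd ⟨i, hi⟩ hlast⟩, hq⟩
  obtain ⟨μ, hμI, hμ⟩ := hI.intermediate_value hpI hqI hcont ⟨hp.le, hq.le⟩
  exact ⟨μ, hμI.1, hμI.2, hμ⟩

theorem exists_strictMono_isSecularRoot_of_pos (hρ : 0 < ρ) (hlam : StrictMono lam)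
    (hz : ∀ i, z i ≠ 0) : ∃ t : ι → ℝ, StrictMono t ∧ ∀ j, IsSecularRoot ρ lam z (t j) := by
  choose t hlt hgt hroot using exists_secularFun_eq_zero_between hρ hlam hz
  refine ⟨t, fun j j' hjj' => (hgt j j' hjj').trans (hlt j'), fun j => ⟨fun i => ?_, hroot j⟩⟩
  rcases le_or_gt i j with hij | hji
  · exact ((hlam.monotone hij).trans_lt (hlt j)).ne
  · exact (hgt j i hji).ne'

-- `ρ < 0` reduces to `ρ > 0` under `μ ↦ -μ`, `λ ↦ -λ`, which reverses the order of the indices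
theorem exists_strictMono_isSecularRoot (hρ : ρ ≠ 0) (hlam : StrictMono lam)
    (hz : ∀ i, z i ≠ 0) : ∃ t : ι → ℝ, StrictMono t ∧ ∀ j, IsSecularRoot ρ lam z (t j) := by
  rcases hρ.lt_or_gt with hneg | hpos
  · obtain ⟨t, ht, hroot⟩ := exists_strictMono_isSecularRoot_of_pos (ι := ιᵒᵈ)
      (lam := fun i => -lam (OrderDual.ofDual i)) (z := fun i => z (OrderDual.ofDual i))
      (neg_pos.2 hneg) (fun _ _ hij => neg_lt_neg (hlam hij)) fun i => hz _
    exact ⟨fun j => -t (OrderDual.toDual j), fun _ _ hjj' => neg_lt_neg (ht hjj'),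
      fun j => IsSecularRoot.of_neg (hroot (OrderDual.toDual j))⟩
  · exact exists_strictMono_isSecularRoot_of_pos hpos hlam hz

end Roots

section Orthogonal

variable {R : Type*} [CommRing R] [DecidableEq ι] {U : Matrix ι ι R}

theorem mulVec_dotProduct_mulVec (hU : Uᵀ * U = 1) (a b : ι → R) :
    (U *ᵥ a) ⬝ᵥ (U *ᵥ b) = a ⬝ᵥ b := by
  rw [dotProduct_mulVec, ← mulVec_transpose, mulVec_mulVec, hU, one_mulVec]

theorem mul_mul_transpose_mulVec_mulVec (hU : Uᵀ * U = 1) (M : Matrix ι ι R) (y : ι → R) :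
    (U * M * Uᵀ) *ᵥ (U *ᵥ y) = U *ᵥ (M *ᵥ y) := by
  rw [mulVec_mulVec, Matrix.mul_assoc, hU, Matrix.mul_one, mulVec_mulVec]

theorem exists_mul_mul_transpose_mulVec_eq_smul_iff (hU : Uᵀ * U = 1) (M : Matrix ι ι R)
    (μ : R) : (∃ x, x ≠ 0 ∧ (U * M * Uᵀ) *ᵥ x = μ • x) ↔ ∃ y, y ≠ 0 ∧ M *ᵥ y = μ • y := by
  have hU' : U * Uᵀ = 1 := mul_eq_one_comm.mp hU
  constructor
  · rintro ⟨x, hx, h⟩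
    refine ⟨Uᵀ *ᵥ x, fun h0 => hx ?_, ?_⟩
    · rw [← one_mulVec x, ← hU', ← mulVec_mulVec, h0, mulVec_zero]
    · rw [← mulVec_smul, ← h, mulVec_mulVec, mulVec_mulVec, ← Matrix.mul_assoc,
        ← Matrix.mul_assoc, hU, Matrix.one_mul]
  · rintro ⟨y, hy, h⟩
    refine ⟨U *ᵥ y, fun h0 => hy ?_, ?_⟩
    · rw [← one_mulVec y, ← hU, ← mulVec_mulVec, h0, mulVec_zero]
    · rw [mul_mul_transpose_mulVec_mulVec hU, h, mulVec_smul]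

theorem add_smul_vecMulVec_eq_mul_mul_transpose {L : Matrix ι ι R} {lam : ι → R}
    (hU : Uᵀ * U = 1) (hL : L = U * diagonal lam * Uᵀ) (ρ : R) (v : ι → R) :
    L + ρ • vecMulVec v v = U * (diagonal lam + ρ • vecMulVec (Uᵀ *ᵥ v) (Uᵀ *ᵥ v)) * Uᵀ := by
  have hv : U *ᵥ (Uᵀ *ᵥ v) = v := by
    rw [mulVec_mulVec, mul_eq_one_comm.mp hU, one_mulVec]
  rw [Matrix.mul_add, Matrix.add_mul, hL, Matrix.mul_smul, Matrix.smul_mul, mul_vecMulVec,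
    vecMulVec_mul, vecMul_transpose, hv]

end Orthogonal

theorem dotProduct_inv_sqrt_smul {κ : Type*} [DecidableEq κ] {w : κ → ι → ℝ}
    (hw : ∀ k, w k ≠ 0) (horth : Pairwise fun k k' => w k ⬝ᵥ w k' = 0) (k k' : κ) :
    ((√(∑ i, w k i ^ 2))⁻¹ • w k) ⬝ᵥ ((√(∑ i, w k' i ^ 2))⁻¹ • w k')
      = if k = k' then 1 else 0 := by
  rw [smul_dotProduct, dotProduct_smul, smul_eq_mul, smul_eq_mul]
  split_ifs with hkk'
  · subst hkk'
    have hsq : ∑ i, w k i ^ 2 = w k ⬝ᵥ w k := by simp only [dotProduct, sq]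
    have hpos : 0 < w k ⬝ᵥ w k := (Fintype.sum_nonneg fun i => mul_self_nonneg (w k i)).lt_of_ne'
      (dotProduct_self_eq_zero.not.2 (hw k))
    rw [hsq, ← mul_assoc, ← mul_inv, ← sq, Real.sq_sqrt hpos.le, inv_mul_cancel₀ hpos.ne']
  · rw [horth hkk', mul_zero, mul_zero]

theorem of_smul_mulVec_secularVec_eq_cauchyMatrix {κ : Type*} [Fintype κ] [DecidableEq ι]
    [DecidableEq κ] (U : Matrix ι ι ℝ) (lam z : ι → ℝ) (c t : κ → ℝ) :
    of (fun j i => (c j • U *ᵥ secularVec lam z (t j)) i)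
      = diagonal (fun j => -c j) * cauchyMatrix t lam * diagonal z * Uᵀ := by
  ext j i
  rw [of_apply, mul_apply]
  simp only [mul_diagonal, diagonal_mul, cauchyMatrix, of_apply, transpose_apply, Pi.smul_apply,
    smul_eq_mul, mulVec, dotProduct, secularVec, mul_sum]
  refine sum_congr rfl fun k _ => ?_
  rw [← neg_sub (lam k), inv_neg]
  ring

end

/-- Rank-one update setting, generic assumptions, `ρ ≠ 0`: no eigenvalue of
`L̃ = L + ρ v vᵀ` equals any `λ_i`; `L̃` has pairwise distinct eigenvalues
`λ̃_1 < … < λ̃_n`; and, setting `w_j = (diag(λ) - λ̃_j I)⁻¹ z` and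
`ũ_j = U w_j / ‖w_j‖₂`, the `ũ_j` form an orthonormal eigenbasis of `L̃`.
Equivalently, `Ũᵀ = diag(s) C̄(λ̃, λ) diag(t) Uᵀ` with `s_j = -1/‖w_j‖₂`,
`t_i = z_i`, and `C̄_{ji} = 1/(λ̃_j - λ_i)`. -/
theorem rank_one_update_eigenbasis_cauchy
    {n : ℕ} (L U : Matrix (Fin (n + 1)) (Fin (n + 1)) ℝ)
    (lam : Fin (n + 1) → ℝ)
    (hU : Uᵀ * U = 1)
    (hLd : L = U * Matrix.diagonal lam * Uᵀ)
    (hlam : StrictMono lam)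
    (ρ : ℝ) (hρ : ρ ≠ 0) (v : Fin (n + 1) → ℝ)
    (z : Fin (n + 1) → ℝ) (hz_def : z = Uᵀ.mulVec v)
    (hz : ∀ i, z i ≠ 0) :
    ∃ (tlam : Fin (n + 1) → ℝ) (tu : Fin (n + 1) → Fin (n + 1) → ℝ),
      StrictMono tlam ∧
      (∀ j i, tlam j ≠ lam i) ∧
      (∀ μ : ℝ,
        (∃ x : Fin (n + 1) → ℝ, x ≠ 0 ∧
            (L + ρ • vecMulVec v v).mulVec x = μ • x) ↔ ∃ j, μ = tlam j) ∧
      (∀ j, tu j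
          = (Real.sqrt (∑ i, (z i / (lam i - tlam j)) ^ 2))⁻¹ •
              U.mulVec (fun i => z i / (lam i - tlam j))) ∧
      (∀ j, (L + ρ • vecMulVec v v).mulVec (tu j) = tlam j • tu j) ∧
      (∀ j j', tu j ⬝ᵥ tu j' = if j = j' then 1 else 0) ∧
      Matrix.of (fun j i => tu j i)
        = Matrix.diagonal
              (fun j => -(Real.sqrt (∑ i, (z i / (lam i - tlam j)) ^ 2))⁻¹)
            * Matrix.of (fun j i => (tlam j - lam i)⁻¹)
            * Matrix.diagonal z * Uᵀ := by
  obtain ⟨tlam, hmono, hroot⟩ := exists_strictMono_isSecularRoot hρ hlam hz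
  have hL : L + ρ • vecMulVec v v = U * (diagonal lam + ρ • vecMulVec z z) * Uᵀ := by
    rw [hz_def]
    exact add_smul_vecMulVec_eq_mul_mul_transpose hU hLd ρ v
  refine ⟨tlam, fun j => (√(∑ i, (z i / (lam i - tlam j)) ^ 2))⁻¹ •
      U *ᵥ secularVec lam z (tlam j), hmono, fun j i => ((hroot j).1 i).symm, fun μ => ?_,
    fun j => rfl, fun j => ?_, fun j j' => ?_,
    of_smul_mulVec_secularVec_eq_cauchyMatrix U lam z _ tlam⟩
  · rw [hL, exists_mul_mul_transpose_mulVec_eq_smul_iff hU]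
    exact exists_mulVec_eq_smul_iff hlam.injective hρ hz hmono.injective hroot μ
  · rw [hL, mulVec_smul, mul_mul_transpose_mulVec_mulVec hU, (hroot j).mulVec_secularVec,
      mulVec_smul, smul_comm]
  · dsimp only
    rw [← mulVec_smul, ← mulVec_smul, mulVec_dotProduct_mulVec hU]
    exact dotProduct_inv_sqrt_smul (fun j => (hroot j).secularVec_ne_zero)
      (fun j j' hjj' => (hroot j).dotProduct_eq_zero (hroot j') (hmono.injective.ne hjj')) j j'
end

section
/- In the rank-one update setting, under the generic assumptions and with ρ ≠ 0, the Cauchy vectors associated with distinct updated eigenvalues are orthogonal: for all j ≠ j' in {1,…,n}, Σ_{i=1}^n z_i² / ((λ_i − λ̃_j)(λ_i − λ̃_{j'})) = 0. Consequently, the matrix diag(s) C̄(λ̃, λ) diag(t) with s_j = 1/‖(diag(λ) − λ̃_j I)^{-1} z‖₂ and t_i = z_i is an orthogonal matrix (an orthogonal Cauchy-like matrix). -/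
set_option maxHeartbeats 1000000


open Matrix Finset

/-- Rank-one update setting, generic assumptions, `ρ ≠ 0`: the Cauchy vectors
associated with distinct updated eigenvalues are orthogonal:
`Σ_i z_i² / ((λ_i - λ̃_j)(λ_i - λ̃_j')) = 0` for `j ≠ j'`. Consequently
`diag(s) C̄(λ̃, λ) diag(t)` with `s_j = 1/‖(diag(λ) - λ̃_j I)⁻¹ z‖₂` and `t_i = z_i`
is an orthogonal (Cauchy-like) matrix. -/
theorem cauchy_vectors_orthogonal
    {n : ℕ} (L U tU : Matrix (Fin n) (Fin n) ℝ) (lam tlam : Fin n → ℝ)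
    (hU : Uᵀ * U = 1)
    (hLd : L = U * Matrix.diagonal lam * Uᵀ)
    (hlam : StrictMono lam)
    (ρ : ℝ) (hρ : ρ ≠ 0) (v : Fin n → ℝ)
    (z : Fin n → ℝ) (hz_def : z = Uᵀ.mulVec v)
    (hz : ∀ i, z i ≠ 0)
    (htU : tUᵀ * tU = 1)
    (htLd : L + ρ • vecMulVec v v = tU * Matrix.diagonal tlam * tUᵀ)
    (htlam : StrictMono tlam) :
    (∀ j j' : Fin n, j ≠ j' →
      ∑ i, z i ^ 2 / ((lam i - tlam j) * (lam i - tlam j')) = 0) ∧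
    (let C : Matrix (Fin n) (Fin n) ℝ :=
        Matrix.diagonal
            (fun j => (Real.sqrt (∑ i, (z i / (lam i - tlam j)) ^ 2))⁻¹)
          * Matrix.of (fun j i => (tlam j - lam i)⁻¹)
          * Matrix.diagonal z;
      C * Cᵀ = 1 ∧ Cᵀ * C = 1) := by
  have hUU : U * Uᵀ = 1 := mul_eq_one_comm.mp hU
  set Q : Matrix (Fin n) (Fin n) ℝ := Uᵀ * tU with hQdef
  have hQ : Qᵀ * Q = 1 := by
    rw [hQdef, transpose_mul, transpose_transpose, Matrix.mul_assoc,
      ← Matrix.mul_assoc U Uᵀ tU, hUU, Matrix.one_mul, htU]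
  have hQQ : Q * Qᵀ = 1 := mul_eq_one_comm.mp hQ
  set M : Matrix (Fin n) (Fin n) ℝ := Matrix.diagonal lam + ρ • vecMulVec z z with hMdef
  have hvv : Uᵀ * vecMulVec v v * U = vecMulVec z z := by
    ext i j
    simp only [Matrix.mul_apply, vecMulVec_apply, transpose_apply, hz_def,
      Matrix.mulVec, dotProduct, Finset.sum_mul, Finset.mul_sum]
    exact Finset.sum_congr rfl fun k _ => Finset.sum_congr rfl fun l _ => by ring

  have hM : M = Q * Matrix.diagonal tlam * Qᵀ := by
    have h1 : Uᵀ * (L + ρ • vecMulVec v v) * U = M := by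
      rw [Matrix.mul_add, Matrix.add_mul, hLd, hMdef]
      congr 1
      · rw [← Matrix.mul_assoc, ← Matrix.mul_assoc, hU, Matrix.one_mul,
          Matrix.mul_assoc, hU, Matrix.mul_one]
      · rw [Matrix.mul_smul, Matrix.smul_mul, hvv]
    rw [← h1, htLd, hQdef, transpose_mul, transpose_transpose]
    rw [Matrix.mul_assoc, Matrix.mul_assoc, Matrix.mul_assoc, Matrix.mul_assoc,
      Matrix.mul_assoc]
  have hMQ : M * Q = Q * Matrix.diagonal tlam := by
    rw [hM, Matrix.mul_assoc, hQ, Matrix.mul_one]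
  -- columns of Q are eigenvectors of M
  have col : ∀ j : Fin n, ∃ w : Fin n → ℝ, w ≠ 0 ∧
      ∀ k, lam k * w k + ρ * z k * (∑ l, z l * w l) = tlam j * w k := by
    intro j
    refine ⟨fun i => Q i j, ?_, ?_⟩
    · intro h0
      have h1 : (Qᵀ * Q) j j = 0 := by
        rw [Matrix.mul_apply]
        refine Finset.sum_eq_zero fun k _ => ?_
        have : Q k j = 0 := congrFun h0 k
        rw [transpose_apply, this, mul_zero]
      rw [hQ, Matrix.one_apply_eq] at h1
      exact one_ne_zero h1
    · intro k
      have h := Matrix.ext_iff.mpr hMQ k j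
      rw [Matrix.mul_apply, Matrix.mul_diagonal] at h
      have hL : ∑ l, M k l * Q l j
          = lam k * Q k j + ∑ l, ρ * (z k * z l) * Q l j := by
        rw [hMdef]
        simp only [Matrix.add_apply, Matrix.smul_apply, vecMulVec_apply,
          Matrix.diagonal_apply, smul_eq_mul, add_mul, Finset.sum_add_distrib,
          ite_mul, zero_mul, Finset.sum_ite_eq, Finset.mem_univ, if_true]
      rw [hL] at h
      have hs : ρ * z k * (∑ l, z l * Q l j) = ∑ l, ρ * (z k * z l) * Q l j := by
        rw [Finset.mul_sum]; exact Finset.sum_congr rfl fun l _ => by ring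
      rw [hs]
      linarith [h]
  -- no updated eigenvalue equals an old one
  have hne : ∀ i j, lam i ≠ tlam j := by
    intro i j hEq
    obtain ⟨w, hw, heig⟩ := col j
    set c := ∑ l, z l * w l with hc
    by_cases hc0 : c = 0
    · have h1 : ∀ k, k ≠ i → w k = 0 := by
        intro k hk
        have h2 := heig k
        rw [hc0, mul_zero, add_zero] at h2
        have hne2 : lam k - tlam j ≠ 0 :=
          sub_ne_zero.mpr (hEq ▸ hlam.injective.ne hk)
        have h3 : (lam k - tlam j) * w k = 0 := by linear_combination h2
        exact (mul_eq_zero.mp h3).resolve_left hne2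
      have h2 : w i = 0 := by
        have h3 : c = z i * w i := by
          rw [hc]
          exact Finset.sum_eq_single i (fun b _ hb => by rw [h1 b hb, mul_zero])
            (fun h => absurd (Finset.mem_univ i) h)
        rw [hc0] at h3
        exact (mul_eq_zero.mp h3.symm).resolve_left (hz i)
      exact hw (funext fun k => by
        by_cases hk : k = i
        · rw [hk]; exact h2
        · exact h1 k hk)
    · have h2 := heig i
      rw [hEq] at h2
      have h3 : ρ * z i * c = 0 := by linarith
      rcases mul_eq_zero.mp h3 with h4 | h4
      · exact (mul_ne_zero hρ (hz i)) h4
      · exact hc0 h4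
  -- secular equation
  have hsec : ∀ j, ∑ i, z i ^ 2 / (lam i - tlam j) = -(1 / ρ) := by
    intro j
    obtain ⟨w, hw, heig⟩ := col j
    set c := ∑ l, z l * w l with hc
    have hd : ∀ k, lam k - tlam j ≠ 0 := fun k => sub_ne_zero.mpr (hne k j)
    have hwval : ∀ k, w k = -(ρ * z k * c) / (lam k - tlam j) := by
      intro k
      have h2 := heig k
      rw [eq_div_iff (hd k)]
      linear_combination h2
    have hc0 : c ≠ 0 := by
      intro h0
      apply hw
      funext k
      show w k = 0
      rw [hwval k, h0, mul_zero, neg_zero, zero_div]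
    have h3 : c = -(ρ * c) * ∑ k, z k ^ 2 / (lam k - tlam j) := by
      calc c = ∑ l, z l * w l := hc
        _ = ∑ l, -(ρ * c) * (z l ^ 2 / (lam l - tlam j)) :=
            Finset.sum_congr rfl fun l _ => by
              rw [hwval l]; field_simp [hd l]
        _ = -(ρ * c) * ∑ k, z k ^ 2 / (lam k - tlam j) := by
              rw [← Finset.mul_sum]
    have h4 : c * (1 + ρ * ∑ k, z k ^ 2 / (lam k - tlam j)) = 0 := by
      linear_combination h3
    have h5 := (mul_eq_zero.mp h4).resolve_left hc0
    field_simp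
    linear_combination h5
  -- part 1
  have part1 : ∀ j j' : Fin n, j ≠ j' →
      ∑ i, z i ^ 2 / ((lam i - tlam j) * (lam i - tlam j')) = 0 := by
    intro j j' hjj'
    have hab : tlam j - tlam j' ≠ 0 :=
      sub_ne_zero.mpr fun h => hjj' (htlam.injective h)
    have hstep : ∀ i, z i ^ 2 / ((lam i - tlam j) * (lam i - tlam j'))
        = (z i ^ 2 / (lam i - tlam j) - z i ^ 2 / (lam i - tlam j'))
            / (tlam j - tlam j') := by
      intro i
      have h1 : lam i - tlam j ≠ 0 := sub_ne_zero.mpr (hne i j)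
      have h2 : lam i - tlam j' ≠ 0 := sub_ne_zero.mpr (hne i j')
      field_simp
      ring
    rw [Finset.sum_congr rfl fun i _ => hstep i, ← Finset.sum_div,
      Finset.sum_sub_distrib, hsec j, hsec j', sub_self, zero_div]
  -- part 2
  have hCC : ∀ C : Matrix (Fin n) (Fin n) ℝ,
      (∀ a b, C a b = (Real.sqrt (∑ i, (z i / (lam i - tlam a)) ^ 2))⁻¹
          * ((tlam a - lam b)⁻¹ * z b)) →
      C * Cᵀ = 1 := by
    intro C hC
    ext a b
    rw [Matrix.mul_apply, Matrix.one_apply]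
    by_cases hab : a = b
    · subst hab
      rw [if_pos rfl]
      have hS : 0 < ∑ i, (z i / (lam i - tlam a)) ^ 2 := by
        refine Finset.sum_pos (fun i _ => ?_) ⟨a, Finset.mem_univ a⟩
        have h1 : z i / (lam i - tlam a) ≠ 0 :=
          div_ne_zero (hz i) (sub_ne_zero.mpr (hne i a))
        exact lt_of_le_of_ne (sq_nonneg _) (Ne.symm (pow_ne_zero 2 h1))
      calc ∑ i, C a i * (Cᵀ) i a
          = ∑ i, (Real.sqrt (∑ i, (z i / (lam i - tlam a)) ^ 2))⁻¹ ^ 2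
              * (z i / (lam i - tlam a)) ^ 2 := by
            refine Finset.sum_congr rfl fun i _ => ?_
            rw [transpose_apply, hC]
            have h2 : tlam a - lam i = -(lam i - tlam a) := by ring
            rw [h2, inv_neg, div_eq_mul_inv]
            ring
        _ = (Real.sqrt (∑ i, (z i / (lam i - tlam a)) ^ 2))⁻¹ ^ 2
              * ∑ i, (z i / (lam i - tlam a)) ^ 2 := by rw [← Finset.mul_sum]
        _ = 1 := by
            rw [inv_pow, Real.sq_sqrt hS.le]
            exact inv_mul_cancel₀ (ne_of_gt hS)
    · rw [if_neg hab]
      have hsum := part1 a b hab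
      calc ∑ i, C a i * (Cᵀ) i b
          = ∑ i, ((Real.sqrt (∑ k, (z k / (lam k - tlam a)) ^ 2))⁻¹
              * (Real.sqrt (∑ k, (z k / (lam k - tlam b)) ^ 2))⁻¹)
              * (z i ^ 2 / ((lam i - tlam a) * (lam i - tlam b))) := by
            refine Finset.sum_congr rfl fun i _ => ?_
            rw [transpose_apply, hC, hC]
            have hprod : (lam i - tlam a) * (lam i - tlam b)
                = (tlam a - lam i) * (tlam b - lam i) := by ring
            rw [div_eq_mul_inv, hprod, mul_inv]
            ring
        _ = ((Real.sqrt (∑ k, (z k / (lam k - tlam a)) ^ 2))⁻¹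
              * (Real.sqrt (∑ k, (z k / (lam k - tlam b)) ^ 2))⁻¹)
              * ∑ i, z i ^ 2 / ((lam i - tlam a) * (lam i - tlam b)) := by
            rw [← Finset.mul_sum]
        _ = 0 := by rw [hsum, mul_zero]
  refine ⟨part1, ?_⟩
  have hent : ∀ a b, (Matrix.diagonal
        (fun j => (Real.sqrt (∑ i, (z i / (lam i - tlam j)) ^ 2))⁻¹)
      * Matrix.of (fun j i => (tlam j - lam i)⁻¹)
      * Matrix.diagonal z) a b
      = (Real.sqrt (∑ i, (z i / (lam i - tlam a)) ^ 2))⁻¹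
          * ((tlam a - lam b)⁻¹ * z b) := by
    intro a b
    rw [Matrix.mul_diagonal, Matrix.diagonal_mul, Matrix.of_apply, mul_assoc]
  exact ⟨hCC _ hent, mul_eq_one_comm.mp (hCC _ hent)⟩
end
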